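/- Let k be a field of characteristic zero, let f ∈ k[X₀, X₁, X₂] be a homogeneous polynomial of degree 5, and let a, b ∈ k³ be linearly independent vectors such that all second-order partial derivatives of f vanish both at a and at b. Then f vanishes identically on the line through the corresponding projective points: f(s·a + t·b) = 0 for all s, t ∈ k. (This is the Bézout-type step showing that a line through two triple points of a plane quintic must be a component of the quintic.) -/

import Mathlib

/-!
On the line `u ↦ x + u • (y - x)` through two triple points `x` and `y`, a form `f` of degree
at most `5` restricts to a polynomial of degree at most `5` in `u`. Its first two derivatives are
first and second partial derivatives of `f` taken along the line, and at a triple point these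
vanish together with `f` itself by Euler's identity. So the restriction has triple roots at
`u = 0` and `u = 1`, hence is zero. Triple points form a cone, so `s • a + t • b` lies on such a
line: it is the midpoint of `(2 * s) • a` and `(2 * t) • b`.
-/

open MvPolynomial

namespace Polynomial

variable {R : Type*} [CommRing R] [IsDomain R]

theorem X_sub_C_pow_dvd_of_forall_isRoot_iterate_derivative [CharZero R] {φ : R[X]} {u : R}
    {n : ℕ} (h : ∀ m ≤ n, (derivative^[m] φ).IsRoot u) : (X - C u) ^ (n + 1) ∣ φ := by
  rcases eq_or_ne φ 0 with rfl | hφ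
  · exact dvd_zero _
  · exact (le_rootMultiplicity_iff hφ).mp (lt_rootMultiplicity_of_isRoot_iterate_derivative hφ h)

theorem eq_zero_of_X_sub_C_pow_dvd_of_X_sub_C_pow_dvd {φ : R[X]} {u v : R} (huv : IsUnit (u - v))
    {m n : ℕ} (hu : (X - C u) ^ m ∣ φ) (hv : (X - C v) ^ n ∣ φ) (hdeg : φ.natDegree < m + n) :
    φ = 0 := by
  refine eq_zero_of_dvd_of_natDegree_lt
    (((isCoprime_X_sub_C_of_isUnit_sub huv).pow).mul_dvd hu hv) ?_
  rwa [natDegree_mul (pow_ne_zero _ (X_sub_C_ne_zero u)) (pow_ne_zero _ (X_sub_C_ne_zero v)),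
    natDegree_pow, natDegree_pow, natDegree_X_sub_C, natDegree_X_sub_C, mul_one, mul_one]

end Polynomial

namespace MvPolynomial

variable {R σ : Type*} [CommRing R] {f : MvPolynomial σ R} {n : ℕ}

noncomputable def restrictLine (p d : σ → R) : MvPolynomial σ R →ₐ[R] Polynomial R :=
  aeval fun i => Polynomial.C (p i) + Polynomial.C (d i) * Polynomial.X

section restrictLine

variable (p d : σ → R)

@[simp]
theorem restrictLine_X (i : σ) :
    restrictLine p d (X i) = Polynomial.C (p i) + Polynomial.C (d i) * Polynomial.X :=
  aeval_X _ _

theorem eval_restrictLine (f : MvPolynomial σ R) (u : R) :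
    (restrictLine p d f).eval u = eval (p + u • d) f := by
  induction f using MvPolynomial.induction_on with
  | C r => simp [restrictLine]
  | add f g hf hg => simp only [map_add, Polynomial.eval_add, hf, hg]
  | mul_X f j hf =>
    simp only [map_mul, Polynomial.eval_mul, hf, restrictLine_X, eval_X, Polynomial.eval_add,
      Polynomial.eval_C, Polynomial.eval_X, Pi.add_apply, Pi.smul_apply, smul_eq_mul]
    ring

theorem derivative_restrictLine [Fintype σ] (f : MvPolynomial σ R) :
    Polynomial.derivative (restrictLine p d f) = ∑ i, d i • restrictLine p d (pderiv i f) := by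
  induction f using MvPolynomial.induction_on with
  | C r => simp [restrictLine]
  | add f g hf hg => simp only [map_add, hf, hg, smul_add, Finset.sum_add_distrib]
  | mul_X f j hf =>
    rw [map_mul, restrictLine_X, Polynomial.derivative_mul, hf, Finset.sum_mul]
    simp only [pderiv_mul, map_add, map_mul, smul_add, Finset.sum_add_distrib, smul_mul_assoc,
      restrictLine_X]
    congr 1
    rw [Finset.sum_eq_single j (fun i _ hij => by simp [pderiv_X_of_ne hij.symm]) (by simp)]
    simpa [Polynomial.smul_eq_C_mul] using mul_comm _ _

theorem natDegree_restrictLine_le (f : MvPolynomial σ R) :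
    (restrictLine p d f).natDegree ≤ f.totalDegree := by
  rw [restrictLine, aeval_def, eval₂_eq]
  refine Polynomial.natDegree_sum_le_of_forall_le _ _ fun m hm => ?_
  refine (Polynomial.natDegree_C_mul_le _ _).trans ((Polynomial.natDegree_prod_le _ _).trans ?_)
  calc ∑ i ∈ m.support, ((Polynomial.C (p i) + Polynomial.C (d i) * Polynomial.X) ^ m i).natDegree
      ≤ ∑ i ∈ m.support, m i := by
        refine Finset.sum_le_sum fun i _ => ?_
        refine (Polynomial.natDegree_pow_le_of_le (m i) ?_).trans (mul_one _).le
        compute_degree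
    _ ≤ f.totalDegree := le_totalDegree hm

end restrictLine

theorem IsHomogeneous.eval_smul (hf : f.IsHomogeneous n) (c : R) (x : σ → R) :
    eval (c • x) f = c ^ n * eval x f := by
  simp only [eval_eq, Finset.mul_sum]
  refine Finset.sum_congr rfl fun m hm => ?_
  have hdeg : ∑ i ∈ m.support, m i = n := by
    rw [← hf (mem_support_iff.mp hm), Finsupp.weight_apply, Finsupp.sum]
    simp only [Pi.one_apply, smul_eq_mul, mul_one]
  simp only [Pi.smul_apply, smul_eq_mul, mul_pow, Finset.prod_mul_distrib,
    Finset.prod_pow_eq_pow_sum, hdeg]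
  ring

theorem IsHomogeneous.eval_eq_zero_of_forall_eval_pderiv_eq_zero [Fintype σ] [IsDomain R]
    [CharZero R] (hf : f.IsHomogeneous n) (hn : n ≠ 0) {x : σ → R}
    (hx : ∀ i, eval x (pderiv i f) = 0) : eval x f = 0 := by
  have euler := congrArg (eval x) hf.sum_X_mul_pderiv
  simp only [map_sum, map_mul, eval_X, hx, mul_zero, Finset.sum_const_zero, map_nsmul] at euler
  exact (smul_eq_zero.mp euler.symm).resolve_left hn

def IsTriplePoint (f : MvPolynomial σ R) (x : σ → R) : Prop :=
  ∀ i j, eval x (pderiv i (pderiv j f)) = 0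

theorem IsTriplePoint.smul (hf : f.IsHomogeneous n) {x : σ → R} (hx : IsTriplePoint f x)
    (c : R) : IsTriplePoint f (c • x) := fun i j => by
  rw [hf.pderiv.pderiv.eval_smul, hx i j, mul_zero]

namespace IsTriplePoint

variable [Fintype σ] [IsDomain R] [CharZero R] {x : σ → R}

theorem eval_pderiv_eq_zero (hf : f.IsHomogeneous n) (hn : 2 ≤ n) (hx : IsTriplePoint f x)
    (j : σ) : eval x (pderiv j f) = 0 :=
  hf.pderiv.eval_eq_zero_of_forall_eval_pderiv_eq_zero (by omega) fun i => hx i j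

theorem eval_eq_zero (hf : f.IsHomogeneous n) (hn : 2 ≤ n) (hx : IsTriplePoint f x) :
    eval x f = 0 :=
  hf.eval_eq_zero_of_forall_eval_pderiv_eq_zero (by omega) (hx.eval_pderiv_eq_zero hf hn)

theorem X_sub_C_pow_three_dvd_restrictLine (hf : f.IsHomogeneous n) (hn : 2 ≤ n) {p d : σ → R}
    {u : R} (hx : IsTriplePoint f (p + u • d)) :
    (Polynomial.X - Polynomial.C u) ^ 3 ∣ restrictLine p d f := by
  refine Polynomial.X_sub_C_pow_dvd_of_forall_isRoot_iterate_derivative fun m hm => ?_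
  interval_cases m <;>
    simp [Polynomial.IsRoot, eval_restrictLine, derivative_restrictLine, Polynomial.eval_finsetSum,
      hx.eval_eq_zero hf hn, hx.eval_pderiv_eq_zero hf hn, hx _ _]

theorem eval_lineMap_eq_zero (hf : f.IsHomogeneous n) (hn : 2 ≤ n) (hn5 : n ≤ 5)
    {y : σ → R} (hx : IsTriplePoint f x) (hy : IsTriplePoint f y) (u : R) :
    eval (AffineMap.lineMap x y u) f = 0 := by
  have hx0 : IsTriplePoint f (x + (0 : R) • (y - x)) := by rwa [zero_smul, add_zero]
  have hy1 : IsTriplePoint f (x + (1 : R) • (y - x)) := by rwa [one_smul, add_sub_cancel]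
  have hdeg := (natDegree_restrictLine_le x (y - x) f).trans hf.totalDegree_le
  have hrestrict : restrictLine x (y - x) f = 0 :=
    Polynomial.eq_zero_of_X_sub_C_pow_dvd_of_X_sub_C_pow_dvd (by simp)
      (hx0.X_sub_C_pow_three_dvd_restrictLine hf hn)
      (hy1.X_sub_C_pow_three_dvd_restrictLine hf hn) (by omega)
  rw [AffineMap.lineMap_apply_module', add_comm, ← eval_restrictLine, hrestrict,
    Polynomial.eval_zero]

end IsTriplePoint

end MvPolynomial

theorem quintic_vanishes_on_line_through_two_triple_points_general
    (k : Type*) [Field k] [CharZero k]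
    (f : MvPolynomial (Fin 3) k) (hhom : f.IsHomogeneous 5)
    (a b : Fin 3 → k)
    (ha : ∀ i j : Fin 3, eval a (pderiv i (pderiv j f)) = 0)
    (hb : ∀ i j : Fin 3, eval b (pderiv i (pderiv j f)) = 0) :
    ∀ s t : k, eval (s • a + t • b) f = 0 := by
  intro s t
  have hmid : s • a + t • b = AffineMap.lineMap ((2 * s) • a) ((2 * t) • b) (2⁻¹ : k) := by
    rw [AffineMap.lineMap_apply_module]
    module
  rw [hmid]
  exact IsTriplePoint.eval_lineMap_eq_zero hhom (by norm_num) (by norm_num)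
    (IsTriplePoint.smul hhom ha _) (IsTriplePoint.smul hhom hb _) _

/-- If a plane quintic (over a field of characteristic zero) has multiplicity
at least `3` at two distinct projective points (spanned by linearly independent
vectors `a`, `b`), i.e. all second-order partial derivatives of `f` vanish at
`a` and at `b`, then `f` vanishes identically on the line through these two
points. -/
theorem quintic_vanishes_on_line_through_two_triple_points
    (k : Type*) [Field k] [CharZero k]
    (f : MvPolynomial (Fin 3) k) (hhom : f.IsHomogeneous 5)
    (a b : Fin 3 → k) (hab : LinearIndependent k ![a, b])
    (ha : ∀ i j : Fin 3, eval a (pderiv i (pderiv j f)) = 0)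
    (hb : ∀ i j : Fin 3, eval b (pderiv i (pderiv j f)) = 0) :
    ∀ s t : k, eval (s • a + t • b) f = 0 :=
  quintic_vanishes_on_line_through_two_triple_points_general k f hhom a b ha hb
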